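/- arXiv:2205.04595 — 6 statements merged into one kernel-verified Lean document; each statement's English description precedes it below -/
import Mathlib

section
/- Suppose η = −1 (put case) and the European values are strictly positive: e_k(x) > 0 for every k < n and x ∈ C. Define f* : {0,…,n−1} × Ξ(C) → [0,∞] by f*(k,ξ) := sup{ α(x) : x ∈ S_k and Ξ(x) = ξ }, with the convention sup ∅ := 0. Then the map x ↦ (α(x), Ξ(x)) is a homeomorphism from C onto (0,∞) × Ξ(C), and for every k < n the stopping region satisfies S_k = { x ∈ C : α(x) ≤ f*(k, Ξ(x)) }, the inequality being taken in [0,∞]. -/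
open MeasureTheory ProbabilityTheory
open scoped ENNReal NNReal

/-- The ambient space `ℝ^{d₁} × ℝ^{d₂} × ℝ^{d₃}` for the state `x = (s, y, z)`. -/
abbrev StateSpace (d₁ d₂ d₃ : ℕ) : Type :=
  (Fin d₁ → ℝ) × (Fin d₂ → ℝ) × (Fin d₃ → ℝ)

/-! For a put, `y ↦ (K - y)⁺` is convex and the payoff is homogeneous along the rays
`γ ↦ γ ∘ x`, so `f (γ ∘ x) ≤ γ f x + (1 - γ) c` holds for the discounted payoff with
`c = e^{-r t_k} K` (its value at the virtual origin); this inequality survives integration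
against the scale-equivariant kernels and taking maxima, hence holds for every value function.
At a point `x` of `S_k` with positive payoff the payoff is affine in `γ ∈ (0, 1]` and meets
this bound, so the whole segment `γ ∘ x` lies in `S_k`; positivity comes from `v_k ≥ e_k > 0`.
Thus each fibre `{x ∈ S_k : Ξ x = ξ}` is, in the coordinate `α`, an interval starting at `0`,
closed at its upper end by continuity, and `S_k` is cut out by `α ≤ f*`. -/

open Set

section Dilation

variable {d₁ d₂ d₃ : ℕ}

def dilate (γ : ℝ) (x : StateSpace d₁ d₂ d₃) : StateSpace d₁ d₂ d₃ :=
  (γ • x.1, x.2.1, γ • x.2.2)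

@[simp]
theorem dilate_dilate (a b : ℝ) (x : StateSpace d₁ d₂ d₃) :
    dilate a (dilate b x) = dilate (a * b) x := by
  simp [dilate, smul_smul]

@[simp]
theorem dilate_one (x : StateSpace d₁ d₂ d₃) : dilate 1 x = x := by
  simp [dilate]

theorem continuous_dilate :
    Continuous fun p : ℝ × StateSpace d₁ d₂ d₃ => dilate p.1 p.2 := by
  unfold dilate; fun_prop

theorem measurable_dilate (γ : ℝ) : Measurable (dilate γ : StateSpace d₁ d₂ d₃ → _) :=
  (continuous_dilate.comp (Continuous.prodMk_right γ)).measurable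

end Dilation

section Latent

variable {d₁ d₂ d₃ : ℕ} {C : Set (StateSpace d₁ d₂ d₃)} {α : StateSpace d₁ d₂ d₃ → ℝ}
  {Ξ : StateSpace d₁ d₂ d₃ → StateSpace d₁ d₂ d₃} {x w : StateSpace d₁ d₂ d₃} {γ : ℝ}

theorem dilate_alpha_xi (hαpos : ∀ x ∈ C, 0 < α x) (hΞ : ∀ x ∈ C, Ξ x = dilate (α x)⁻¹ x)
    (hx : x ∈ C) : dilate (α x) (Ξ x) = x := by
  rw [hΞ x hx, dilate_dilate, mul_inv_cancel₀ (hαpos x hx).ne', dilate_one]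

theorem xi_dilate (hαhom : ∀ γ > (0 : ℝ), ∀ x ∈ C, α (dilate γ x) = γ * α x)
    (hΞ : ∀ x ∈ C, Ξ x = dilate (α x)⁻¹ x)
    (hC : ∀ γ > (0 : ℝ), ∀ x ∈ C, dilate γ x ∈ C) (hx : x ∈ C) (hγ : 0 < γ) :
    Ξ (dilate γ x) = Ξ x := by
  rw [hΞ _ (hC γ hγ x hx), hΞ x hx, hαhom γ hγ x hx, dilate_dilate, mul_inv_rev,
    inv_mul_cancel_right₀ hγ.ne']

theorem xi_mem (hC : ∀ γ > (0 : ℝ), ∀ x ∈ C, dilate γ x ∈ C) (hαpos : ∀ x ∈ C, 0 < α x)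
    (hΞ : ∀ x ∈ C, Ξ x = dilate (α x)⁻¹ x) (hx : x ∈ C) : Ξ x ∈ C :=
  hΞ x hx ▸ hC _ (inv_pos.2 (hαpos x hx)) x hx

theorem alpha_xi (hαhom : ∀ γ > (0 : ℝ), ∀ x ∈ C, α (dilate γ x) = γ * α x)
    (hαpos : ∀ x ∈ C, 0 < α x) (hΞ : ∀ x ∈ C, Ξ x = dilate (α x)⁻¹ x) (hx : x ∈ C) :
    α (Ξ x) = 1 := by
  rw [hΞ x hx, hαhom _ (inv_pos.2 (hαpos x hx)) x hx, inv_mul_cancel₀ (hαpos x hx).ne']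

theorem xi_xi (hαhom : ∀ γ > (0 : ℝ), ∀ x ∈ C, α (dilate γ x) = γ * α x)
    (hαpos : ∀ x ∈ C, 0 < α x) (hΞ : ∀ x ∈ C, Ξ x = dilate (α x)⁻¹ x)
    (hC : ∀ γ > (0 : ℝ), ∀ x ∈ C, dilate γ x ∈ C) (hx : x ∈ C) : Ξ (Ξ x) = Ξ x := by
  conv_lhs => rw [hΞ x hx]
  exact xi_dilate hαhom hΞ hC hx (inv_pos.2 (hαpos x hx))

theorem continuousOn_xi (hαc : ContinuousOn α C) (hαpos : ∀ x ∈ C, 0 < α x)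
    (hΞ : ∀ x ∈ C, Ξ x = dilate (α x)⁻¹ x) : ContinuousOn Ξ C :=
  (continuous_dilate.comp_continuousOn
    ((hαc.inv₀ fun x hx => (hαpos x hx).ne').prodMk continuousOn_id)).congr hΞ

theorem dilate_mem_of_mem_Ioi_prod_image (hC : ∀ γ > (0 : ℝ), ∀ x ∈ C, dilate γ x ∈ C)
    (hαpos : ∀ x ∈ C, 0 < α x) (hΞ : ∀ x ∈ C, Ξ x = dilate (α x)⁻¹ x)
    {p : ℝ × StateSpace d₁ d₂ d₃} (hp : p ∈ Ioi (0 : ℝ) ×ˢ (Ξ '' C)) : dilate p.1 p.2 ∈ C := by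
  obtain ⟨hγ, x, hx, hξ⟩ := hp
  exact hξ ▸ hC _ hγ _ (xi_mem hC hαpos hΞ hx)

theorem alpha_xi_dilate_of_mem_Ioi_prod_image (hC : ∀ γ > (0 : ℝ), ∀ x ∈ C, dilate γ x ∈ C)
    (hαpos : ∀ x ∈ C, 0 < α x) (hαhom : ∀ γ > (0 : ℝ), ∀ x ∈ C, α (dilate γ x) = γ * α x)
    (hΞ : ∀ x ∈ C, Ξ x = dilate (α x)⁻¹ x)
    {p : ℝ × StateSpace d₁ d₂ d₃} (hp : p ∈ Ioi (0 : ℝ) ×ˢ (Ξ '' C)) :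
    (α (dilate p.1 p.2), Ξ (dilate p.1 p.2)) = p := by
  obtain ⟨hγ, x, hx, hξ⟩ := hp
  have hΞx := xi_mem hC hαpos hΞ hx
  rw [← hξ, hαhom _ hγ _ hΞx, alpha_xi hαhom hαpos hΞ hx, mul_one,
    xi_dilate hαhom hΞ hC hΞx hγ, xi_xi hαhom hαpos hΞ hC hx, hξ]

def latentHomeomorph (hC : ∀ γ > (0 : ℝ), ∀ x ∈ C, dilate γ x ∈ C)
    (hαc : ContinuousOn α C) (hαpos : ∀ x ∈ C, 0 < α x)
    (hαhom : ∀ γ > (0 : ℝ), ∀ x ∈ C, α (dilate γ x) = γ * α x)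
    (hΞ : ∀ x ∈ C, Ξ x = dilate (α x)⁻¹ x) : C ≃ₜ ↥(Ioi (0 : ℝ) ×ˢ (Ξ '' C)) where
  toFun x := ⟨(α x, Ξ x), hαpos x x.2, x, x.2, rfl⟩
  invFun p := ⟨dilate p.1.1 p.1.2, dilate_mem_of_mem_Ioi_prod_image hC hαpos hΞ p.2⟩
  left_inv x := Subtype.ext (dilate_alpha_xi hαpos hΞ x.2)
  right_inv p := Subtype.ext (alpha_xi_dilate_of_mem_Ioi_prod_image hC hαpos hαhom hΞ p.2)
  continuous_toFun :=
    (hαc.domRestrict.prodMk (continuousOn_xi hαc hαpos hΞ).domRestrict).subtype_mk _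
  continuous_invFun := (continuous_dilate.comp continuous_subtype_val).subtype_mk _

theorem dilate_eq_dilate_of_xi_eq (hαpos : ∀ x ∈ C, 0 < α x)
    (hΞ : ∀ x ∈ C, Ξ x = dilate (α x)⁻¹ x) (hx : x ∈ C) (hw : w ∈ C) (h : Ξ w = Ξ x) :
    dilate γ x = dilate (γ * α x / α w) w := by
  conv_lhs => rw [← dilate_alpha_xi hαpos hΞ hx, ← h, hΞ w hw]
  simp only [dilate_dilate, mul_assoc, div_eq_mul_inv]

end Latent

section BackwardRecursion

variable {X : Type*} [MeasurableSpace X] {C : Set X} {κ : ℕ → Kernel X X} {n : ℕ}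

theorem exists_mem_eqOn_of_backward_recursion {L : Set (X → ℝ)}
    (hκC : ∀ k < n, ∀ x ∈ C, κ k x Cᶜ = 0)
    (hL : ∀ k < n, ∀ ψ ∈ L, (fun x => ∫ y, ψ y ∂κ k x) ∈ L)
    (g : ℕ → X → ℝ → ℝ) (hg : ∀ k < n, ∀ ψ ∈ L, (fun x => g k x (ψ x)) ∈ L)
    {u : ℕ → X → ℝ} (hun : ∃ ψ ∈ L, ∀ x ∈ C, ψ x = u n x)
    (hu : ∀ k < n, ∀ x ∈ C, u k x = g k x (∫ y, u (k + 1) y ∂κ k x)) :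
    ∀ k ≤ n, ∃ ψ ∈ L, ∀ x ∈ C, ψ x = u k x := by
  intro k hk
  induction hk using Nat.decreasingInduction with
  | self => exact hun
  | of_succ k hk ih =>
    obtain ⟨ψ, hψL, hψu⟩ := ih
    refine ⟨_, hg k hk _ (hL k hk ψ hψL), fun x hx => ?_⟩
    rw [hu k hk x hx,
      integral_congr_ae (EqOn.eventuallyEq_of_mem hψu (mem_ae_iff.2 (hκC k hk x hx)))]

theorem integrable_of_exists_mem_eqOn {L : Set (X → ℝ)} {u : ℕ → X → ℝ}
    (hκC : ∀ k < n, ∀ x ∈ C, κ k x Cᶜ = 0)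
    (hL : ∀ k < n, ∀ ψ ∈ L, ∀ x ∈ C, Integrable ψ (κ k x))
    (hu : ∀ k ≤ n, ∃ ψ ∈ L, ∀ x ∈ C, ψ x = u k x) :
    ∀ k < n, ∀ x ∈ C, Integrable (u (k + 1)) (κ k x) := by
  intro k hk x hx
  obtain ⟨ψ, hψL, hψu⟩ := hu (k + 1) hk
  exact (hL k hk ψ hψL x hx).congr (EqOn.eventuallyEq_of_mem hψu (mem_ae_iff.2 (hκC k hk x hx)))

theorem european_le_value {φ e v : ℕ → X → ℝ} (hκC : ∀ k < n, ∀ x ∈ C, κ k x Cᶜ = 0)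
    (hen : ∀ x ∈ C, e n x = φ n x) (he : ∀ k < n, ∀ x ∈ C, e k x = ∫ y, e (k + 1) y ∂κ k x)
    (hvn : ∀ x ∈ C, v n x = φ n x)
    (hv : ∀ k < n, ∀ x ∈ C, v k x = max (φ k x) (∫ y, v (k + 1) y ∂κ k x))
    (heint : ∀ k < n, ∀ x ∈ C, Integrable (e (k + 1)) (κ k x))
    (hvint : ∀ k < n, ∀ x ∈ C, Integrable (v (k + 1)) (κ k x)) :
    ∀ k ≤ n, ∀ x ∈ C, e k x ≤ v k x := by
  intro k hk
  induction hk using Nat.decreasingInduction with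
  | self => exact fun x hx => (hen x hx).trans_le (hvn x hx).ge
  | of_succ k hk ih =>
    intro x hx
    rw [he k hk x hx, hv k hk x hx]
    refine (integral_mono_ae (heint k hk x hx) (hvint k hk x hx) ?_).trans (le_max_right _ _)
    filter_upwards [mem_ae_iff.2 (hκC k hk x hx)] with y hy using ih y hy

end BackwardRecursion

section GrowthClass

variable {E : Type*} [SeminormedAddGroup E]

/-- The class `𝓛_a`. -/
def growthClass (C : Set E) (a : ℝ) : Set (E → ℝ) :=
  {ψ | ContinuousOn ψ C ∧ ∃ c > 0, ∀ x ∈ C, |ψ x| ≤ c * (1 + ‖x‖ ^ a)}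

theorem max_mem_growthClass {C : Set E} {a : ℝ} {f g : E → ℝ} (hf : f ∈ growthClass C a)
    (hg : g ∈ growthClass C a) : (fun x => max (f x) (g x)) ∈ growthClass C a := by
  obtain ⟨hfc, c₁, hc₁, hf⟩ := hf
  obtain ⟨hgc, c₂, hc₂, hg⟩ := hg
  refine ⟨hfc.sup hgc, max c₁ c₂, lt_max_of_lt_left hc₁, fun x hx => ?_⟩
  have hB : 0 ≤ 1 + ‖x‖ ^ a := by positivity
  calc |max (f x) (g x)| ≤ max |f x| |g x| := abs_max_le_max_abs_abs
    _ ≤ max (c₁ * (1 + ‖x‖ ^ a)) (c₂ * (1 + ‖x‖ ^ a)) := max_le_max (hf x hx) (hg x hx)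
    _ = max c₁ c₂ * (1 + ‖x‖ ^ a) := (max_mul_of_nonneg _ _ hB).symm

end GrowthClass

section RayConvex

variable {d₁ d₂ d₃ : ℕ} {C : Set (StateSpace d₁ d₂ d₃)} {c c' : ℝ}
  {f g : StateSpace d₁ d₂ d₃ → ℝ}

/-- Convexity of `f` along each segment from `x` to the origin, where `f` is given the
value `c`. -/
def RayConvex (C : Set (StateSpace d₁ d₂ d₃)) (c : ℝ) (f : StateSpace d₁ d₂ d₃ → ℝ) : Prop :=
  ∀ x ∈ C, ∀ γ ∈ Ioc (0 : ℝ) 1, f (dilate γ x) ≤ γ * f x + (1 - γ) * c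

theorem RayConvex.mono (hf : RayConvex C c f) (hc : c ≤ c') : RayConvex C c' f := by
  intro x hx γ hγ
  have := mul_le_mul_of_nonneg_left hc (sub_nonneg.2 hγ.2)
  linarith [hf x hx γ hγ]

theorem RayConvex.max (hf : RayConvex C c f) (hg : RayConvex C c g) :
    RayConvex C c fun x => max (f x) (g x) := by
  intro x hx γ hγ
  have hmax := mul_le_mul_of_nonneg_left (le_max_left (f x) (g x)) hγ.1.le
  have hmax' := mul_le_mul_of_nonneg_left (le_max_right (f x) (g x)) hγ.1.le
  exact max_le (by linarith [hf x hx γ hγ]) (by linarith [hg x hx γ hγ])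

theorem RayConvex.congr (hC : ∀ γ > (0 : ℝ), ∀ x ∈ C, dilate γ x ∈ C) (hf : RayConvex C c f)
    (hfg : ∀ x ∈ C, f x = g x) : RayConvex C c g := by
  intro x hx γ hγ
  rw [← hfg x hx, ← hfg _ (hC γ hγ.1 x hx)]
  exact hf x hx γ hγ

theorem RayConvex.integral {κ : Kernel (StateSpace d₁ d₂ d₃) (StateSpace d₁ d₂ d₃)}
    [IsMarkovKernel κ] (hf : RayConvex C c f) (hC : ∀ γ > (0 : ℝ), ∀ x ∈ C, dilate γ x ∈ C)
    (hκC : ∀ x ∈ C, κ x Cᶜ = 0)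
    (hκdil : ∀ γ > (0 : ℝ), ∀ x ∈ C, (κ x).map (dilate γ) = κ (dilate γ x))
    (hint : ∀ x ∈ C, Integrable f (κ x)) : RayConvex C c fun x => ∫ y, f y ∂κ x := by
  intro x hx γ hγ
  have hfγ : Integrable f ((κ x).map (dilate γ)) := by
    rw [hκdil γ hγ.1 x hx]; exact hint _ (hC γ hγ.1 x hx)
  have hbound : Integrable (fun y => γ * f y + (1 - γ) * c) (κ x) :=
    ((hint x hx).const_mul γ).add (integrable_const _)
  calc ∫ y, f y ∂κ (dilate γ x) = ∫ y, f (dilate γ y) ∂κ x := by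
        rw [← hκdil γ hγ.1 x hx,
          integral_map (measurable_dilate γ).aemeasurable hfγ.aestronglyMeasurable]
    _ ≤ ∫ y, (γ * f y + (1 - γ) * c) ∂κ x := by
        refine integral_mono_ae (hfγ.comp_measurable (measurable_dilate γ)) hbound ?_
        filter_upwards [mem_ae_iff.2 (hκC x hx)] with y hy using hf y hy γ hγ
    _ = γ * ∫ y, f y ∂κ x + (1 - γ) * c := by
        rw [integral_add ((hint x hx).const_mul γ) (integrable_const _), integral_const_mul,
          integral_const]
        simp

/-- Convexity of `y ↦ (K - y)⁺` between `0` and `m`. -/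
theorem max_sub_mul_le {K m γ : ℝ} (hK : 0 ≤ K) (hγ : γ ∈ Ioc (0 : ℝ) 1) :
    max (K - γ * m) 0 ≤ γ * max (K - m) 0 + (1 - γ) * K := by
  have := mul_le_mul_of_nonneg_left (le_max_left (K - m) 0) hγ.1.le
  have := mul_nonneg hγ.1.le (le_max_right (K - m) 0)
  have := mul_nonneg (sub_nonneg.2 hγ.2) hK
  exact max_le (by linarith) (by linarith)

theorem rayConvex_putPayoff {φ m : StateSpace d₁ d₂ d₃ → ℝ} {D K : ℝ} (hD : 0 ≤ D) (hK : 0 ≤ K)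
    (hC : ∀ γ > (0 : ℝ), ∀ x ∈ C, dilate γ x ∈ C)
    (hm : ∀ γ > (0 : ℝ), ∀ x ∈ C, m (dilate γ x) = γ * m x)
    (hφ : ∀ x ∈ C, φ x = D * max (K - m x) 0) : RayConvex C (D * K) φ := by
  intro x hx γ hγ
  rw [hφ _ (hC γ hγ.1 x hx), hφ x hx, hm γ hγ.1 x hx]
  have := mul_le_mul_of_nonneg_left (max_sub_mul_le (m := m x) hK hγ) hD
  linarith

theorem rayConvex_value {κ : ℕ → Kernel (StateSpace d₁ d₂ d₃) (StateSpace d₁ d₂ d₃)}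
    [∀ k, IsMarkovKernel (κ k)] {n : ℕ} {φ v : ℕ → StateSpace d₁ d₂ d₃ → ℝ} {c : ℕ → ℝ}
    (hC : ∀ γ > (0 : ℝ), ∀ x ∈ C, dilate γ x ∈ C) (hκC : ∀ k < n, ∀ x ∈ C, κ k x Cᶜ = 0)
    (hκdil : ∀ k < n, ∀ γ > (0 : ℝ), ∀ x ∈ C, (κ k x).map (dilate γ) = κ k (dilate γ x))
    (hc : ∀ k < n, c (k + 1) ≤ c k) (hφ : ∀ k ≤ n, RayConvex C (c k) (φ k))
    (hvn : ∀ x ∈ C, v n x = φ n x)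
    (hv : ∀ k < n, ∀ x ∈ C, v k x = max (φ k x) (∫ y, v (k + 1) y ∂κ k x))
    (hint : ∀ k < n, ∀ x ∈ C, Integrable (v (k + 1)) (κ k x)) :
    ∀ k ≤ n, RayConvex C (c k) (v k) := by
  intro k hk
  induction hk using Nat.decreasingInduction with
  | self => exact (hφ n le_rfl).congr hC fun x hx => (hvn x hx).symm
  | of_succ k hk ih =>
    have hcont := (ih.integral hC (hκC k hk) (hκdil k hk) (hint k hk)).mono (hc k hk)
    exact ((hφ k hk.le).max hcont).congr hC fun x hx => (hv k hk x hx).symm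

theorem value_dilate_eq_payoff_of_stop {φ v I m : StateSpace d₁ d₂ d₃ → ℝ} {D K γ : ℝ}
    {x : StateSpace d₁ d₂ d₃} (hK : 0 ≤ K) (hC : ∀ γ > (0 : ℝ), ∀ x ∈ C, dilate γ x ∈ C)
    (hm : ∀ γ > (0 : ℝ), ∀ x ∈ C, m (dilate γ x) = γ * m x)
    (hφ : ∀ x ∈ C, φ x = D * max (K - m x) 0) (hv : ∀ x ∈ C, v x = max (φ x) (I x))
    (hI : RayConvex C (D * K) I) (hx : x ∈ C) (hstop : v x = φ x) (hpos : 0 < φ x)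
    (hγ : γ ∈ Ioc (0 : ℝ) 1) : v (dilate γ x) = φ (dilate γ x) := by
  have hγx := hC γ hγ.1 x hx
  have hKm : 0 < K - m x := by
    by_contra! h
    rw [hφ x hx, max_eq_right h, mul_zero] at hpos
    exact hpos.false
  have hφγ : φ (dilate γ x) = γ * φ x + (1 - γ) * (D * K) := by
    have : 0 ≤ (1 - γ) * K := mul_nonneg (sub_nonneg.2 hγ.2) hK
    rw [hφ _ hγx, hφ x hx, hm γ hγ.1 x hx, max_eq_left hKm.le,
      max_eq_left (by nlinarith [hγ.1])]
    ring
  have hIx : I x ≤ φ x := hstop ▸ hv x hx ▸ le_max_right _ _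
  rw [hv _ hγx, max_eq_left]
  have := mul_le_mul_of_nonneg_left hIx hγ.1.le
  linarith [hI x hx γ hγ]

end RayConvex

section StoppingRegion

variable {d₁ d₂ d₃ : ℕ} {C : Set (StateSpace d₁ d₂ d₃)}

theorem eq_of_forall_dilate_eq {f g : StateSpace d₁ d₂ d₃ → ℝ} {x : StateSpace d₁ d₂ d₃}
    (hC : ∀ γ > (0 : ℝ), ∀ x ∈ C, dilate γ x ∈ C) (hf : ContinuousOn f C)
    (hg : ContinuousOn g C) (hx : x ∈ C)
    (h : ∀ γ ∈ Ioo (0 : ℝ) 1, f (dilate γ x) = g (dilate γ x)) : f x = g x := by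
  have hray : ContinuousOn (fun γ : ℝ => dilate γ x) (Ioc 0 1) :=
    (continuous_dilate.comp (Continuous.prodMk_left x)).continuousOn
  have hmaps : MapsTo (fun γ : ℝ => dilate γ x) (Ioc 0 1) C := fun γ hγ => hC γ hγ.1 x hx
  have hsub : Ioc (0 : ℝ) 1 ⊆ closure (Ioo 0 1) := by
    rw [closure_Ioo zero_ne_one]; exact Ioc_subset_Icc_self
  simpa using Set.EqOn.of_subset_closure h (hf.comp hray hmaps) (hg.comp hray hmaps)
    Ioo_subset_Ioc_self hsub (right_mem_Ioc.2 zero_lt_one)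

theorem eq_setOf_ofReal_le_sSup {α : StateSpace d₁ d₂ d₃ → ℝ}
    {Ξ : StateSpace d₁ d₂ d₃ → StateSpace d₁ d₂ d₃} {S : Set (StateSpace d₁ d₂ d₃)}
    (hαpos : ∀ x ∈ C, 0 < α x) (hΞ : ∀ x ∈ C, Ξ x = dilate (α x)⁻¹ x) (hSC : S ⊆ C)
    (hdown : ∀ x ∈ S, ∀ γ ∈ Ioo (0 : ℝ) 1, dilate γ x ∈ S)
    (hclosed : ∀ x ∈ C, (∀ γ ∈ Ioo (0 : ℝ) 1, dilate γ x ∈ S) → x ∈ S) :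
    S = {x | x ∈ C ∧ ENNReal.ofReal (α x) ≤
      sSup ((fun x => ENNReal.ofReal (α x)) '' {w | w ∈ S ∧ Ξ w = Ξ x})} := by
  ext x
  refine ⟨fun hx => ⟨hSC hx, le_sSup ⟨x, ⟨hx, rfl⟩, rfl⟩⟩,
    fun ⟨hx, hle⟩ => hclosed x hx fun γ hγ => ?_⟩
  have hαx := hαpos x hx
  have hlt : ENNReal.ofReal (γ * α x) < ENNReal.ofReal (α x) :=
    (ENNReal.ofReal_lt_ofReal_iff hαx).2 (by nlinarith [hγ.2])
  obtain ⟨_, ⟨w, ⟨hwS, hwΞ⟩, rfl⟩, hwlt⟩ := lt_sSup_iff.1 (hlt.trans_le hle)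
  have hαw := hαpos w (hSC hwS)
  rw [dilate_eq_dilate_of_xi_eq hαpos hΞ hx (hSC hwS) hwΞ]
  exact hdown w hwS _ ⟨by have := hγ.1; positivity,
    (div_lt_one hαw).2 ((ENNReal.ofReal_lt_ofReal_iff hαw).1 hwlt)⟩

end StoppingRegion

theorem stmt_4_general
    {d₁ d₂ d₃ : ℕ}
    (C : Set (StateSpace d₁ d₂ d₃))
    (scale : ℝ → StateSpace d₁ d₂ d₃ → StateSpace d₁ d₂ d₃)
    (hscale : ∀ γ x, scale γ x = (γ • x.1, x.2.1, γ • x.2.2))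
    (hC : ∀ γ > (0 : ℝ), ∀ x ∈ C, scale γ x ∈ C)
    (n : ℕ) (t : ℕ → ℝ) (ht : ∀ i < n, t i < t (i + 1))
    (a : ℝ)
    (La : Set (StateSpace d₁ d₂ d₃ → ℝ))
    (hLa : La = {ψ | ContinuousOn ψ C ∧
      ∃ c > 0, ∀ x ∈ C, |ψ x| ≤ c * (1 + ‖x‖ ^ a)})
    (α β : StateSpace d₁ d₂ d₃ → ℝ)
    (hαc : ContinuousOn α C) (hαpos : ∀ x ∈ C, 0 < α x)
    (hαhom : ∀ γ > (0 : ℝ), ∀ x ∈ C, α (scale γ x) = γ * α x)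
    (hβhom : ∀ γ > (0 : ℝ), ∀ x ∈ C, β (scale γ x) = γ * β x)
    (K r η : ℝ) (hK : 0 < K) (hr : 0 ≤ r) (hη : η = -1)
    (φ : ℕ → StateSpace d₁ d₂ d₃ → ℝ)
    (hφdef : ∀ k ≤ n, ∀ x ∈ C,
      φ k x = Real.exp (-(r * t k)) * max (η * (α x - β x - K)) 0)
    (hφLa : ∀ k ≤ n, φ k ∈ La)
    (κ : ℕ → Kernel (StateSpace d₁ d₂ d₃) (StateSpace d₁ d₂ d₃))
    (hκ : ∀ k, IsMarkovKernel (κ k))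
    (hκC : ∀ k < n, ∀ x ∈ C, (κ k) x Cᶜ = 0)
    (hgc : ∀ k < n, ∀ ψ ∈ La,
      (∀ x ∈ C, Integrable ψ ((κ k) x)) ∧
      (fun x => ∫ y, ψ y ∂((κ k) x)) ∈ La)
    (hκscale : ∀ k < n, ∀ γ > (0 : ℝ), ∀ x ∈ C,
      Measure.map (scale γ) ((κ k) x) = (κ k) (scale γ x))
    (v : ℕ → StateSpace d₁ d₂ d₃ → ℝ)
    (hvn : ∀ x ∈ C, v n x = φ n x)
    (hv : ∀ k < n, ∀ x ∈ C, v k x = max (φ k x) (∫ y, v (k + 1) y ∂((κ k) x)))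
    (e : ℕ → StateSpace d₁ d₂ d₃ → ℝ)
    (hen : ∀ x ∈ C, e n x = φ n x)
    (he : ∀ k < n, ∀ x ∈ C, e k x = ∫ y, e (k + 1) y ∂((κ k) x))
    (hepos : ∀ k < n, ∀ x ∈ C, 0 < e k x)
    (S : ℕ → Set (StateSpace d₁ d₂ d₃))
    (hS : ∀ k, S k = {x | x ∈ C ∧ v k x = φ k x})
    (Ξ : StateSpace d₁ d₂ d₃ → StateSpace d₁ d₂ d₃)
    (hΞ : ∀ x ∈ C, Ξ x = scale (α x)⁻¹ x)
    (fstar : ℕ → StateSpace d₁ d₂ d₃ → ℝ≥0∞)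
    (hfstar : ∀ k < n, ∀ ξ, fstar k ξ =
      sSup ((fun x => ENNReal.ofReal (α x)) '' {x | x ∈ S k ∧ Ξ x = ξ})) :
    (∃ H : ↥C ≃ₜ ↥(Set.Ioi (0 : ℝ) ×ˢ (Ξ '' C)),
      ∀ x : ↥C, (H x : ℝ × StateSpace d₁ d₂ d₃) = (α ↑x, Ξ ↑x)) ∧
    (∀ k < n, S k = {x | x ∈ C ∧ ENNReal.ofReal (α x) ≤ fstar k (Ξ x)}) := by
  subst hη
  obtain rfl : scale = dilate := funext fun γ => funext (hscale γ)
  obtain rfl : La = growthClass C a := hLa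
  obtain rfl : S = fun k => {x | x ∈ C ∧ v k x = φ k x} := funext hS
  refine ⟨⟨latentHomeomorph hC hαc hαpos hαhom hΞ, fun _ => rfl⟩, fun k hk => ?_⟩
  have hm : ∀ γ > (0 : ℝ), ∀ x ∈ C, α (dilate γ x) - β (dilate γ x) = γ * (α x - β x) :=
    fun γ hγ x hx => by rw [hαhom γ hγ x hx, hβhom γ hγ x hx, mul_sub]
  have hφ : ∀ k ≤ n, ∀ x ∈ C, φ k x = Real.exp (-(r * t k)) * max (K - (α x - β x)) 0 :=
    fun k hk x hx => by rw [hφdef k hk x hx, neg_one_mul, neg_sub]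
  have hdisc : ∀ k < n, Real.exp (-(r * t (k + 1))) * K ≤ Real.exp (-(r * t k)) * K :=
    fun k hk => by gcongr; exact (ht k hk).le
  have hvL := exists_mem_eqOn_of_backward_recursion hκC (fun k hk ψ hψ => (hgc k hk ψ hψ).2)
    (fun k x c => max (φ k x) c) (fun k hk ψ hψ => max_mem_growthClass (hφLa k hk.le) hψ)
    ⟨φ n, hφLa n le_rfl, fun x hx => (hvn x hx).symm⟩ hv
  have heL := exists_mem_eqOn_of_backward_recursion hκC (fun k hk ψ hψ => (hgc k hk ψ hψ).2)
    (fun _ _ c => c) (fun _ _ _ hψ => hψ) ⟨φ n, hφLa n le_rfl, fun x hx => (hen x hx).symm⟩ he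
  have hvint := integrable_of_exists_mem_eqOn hκC (fun k hk ψ hψ => (hgc k hk ψ hψ).1) hvL
  have hev := european_le_value hκC hen he hvn hv
    (integrable_of_exists_mem_eqOn hκC (fun k hk ψ hψ => (hgc k hk ψ hψ).1) heL) hvint
  have hcont := ((rayConvex_value hC hκC hκscale hdisc
    (fun k hk => rayConvex_putPayoff (Real.exp_pos _).le hK.le hC hm (hφ k hk)) hvn hv hvint
    (k + 1) hk).integral hC (hκC k hk) (hκscale k hk) (hvint k hk)).mono (hdisc k hk)
  have hvc : ContinuousOn (v k) C := by
    obtain ⟨ψ, hψ, hψv⟩ := hvL k hk.le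
    exact hψ.1.congr fun x hx => (hψv x hx).symm
  simp only [hfstar k hk]
  refine eq_setOf_ofReal_le_sSup hαpos hΞ (fun x hx => hx.1) ?_ fun x hx h =>
    ⟨hx, eq_of_forall_dilate_eq hC hvc (hφLa k hk.le).1 hx fun γ hγ => (h γ hγ).2⟩
  rintro x ⟨hx, hstop⟩ γ hγ
  have hpos : 0 < φ k x := (hepos k hk x hx).trans_le (hstop ▸ hev k hk.le x hx)
  exact ⟨hC γ hγ.1 x hx, value_dilate_eq_payoff_of_stop hK.le hC hm (hφ k hk.le) (hv k hk)
    hcont hx hstop hpos ⟨hγ.1, hγ.2.le⟩⟩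

/-- Put case (`η = −1`): suppose the European values are strictly
positive, `e_k(x) > 0` for every `k < n` and `x ∈ C`.  With the latent coordinate map
`Ξ(x) := (s/α(x), y, z/α(x))` and `f*(k,ξ) := sup{α(x) : x ∈ S_k, Ξ(x) = ξ}` (with
`sup ∅ := 0`), the map `x ↦ (α(x), Ξ(x))` is a homeomorphism from `C` onto
`(0,∞) × Ξ(C)`, and for every `k < n` the stopping region satisfies
`S_k = { x ∈ C : α(x) ≤ f*(k, Ξ(x)) }`, the inequality being taken in `[0,∞]`. -/
theorem stmt_4
    {d₁ d₂ d₃ : ℕ}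
    (C : Set (StateSpace d₁ d₂ d₃)) (hCmeas : MeasurableSet C)
    (scale : ℝ → StateSpace d₁ d₂ d₃ → StateSpace d₁ d₂ d₃)
    (hscale : ∀ γ x, scale γ x = (γ • x.1, x.2.1, γ • x.2.2))
    (hC : ∀ γ > (0 : ℝ), ∀ x ∈ C, scale γ x ∈ C)
    (n : ℕ) (hn : 1 ≤ n) (t : ℕ → ℝ) (ht : ∀ i < n, t i < t (i + 1))
    (a : ℝ) (ha : 0 < a)
    (La : Set (StateSpace d₁ d₂ d₃ → ℝ))
    (hLa : La = {ψ | ContinuousOn ψ C ∧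
      ∃ c > 0, ∀ x ∈ C, |ψ x| ≤ c * (1 + ‖x‖ ^ a)})
    (α β : StateSpace d₁ d₂ d₃ → ℝ)
    (hαc : ContinuousOn α C) (hαpos : ∀ x ∈ C, 0 < α x)
    (hαhom : ∀ γ > (0 : ℝ), ∀ x ∈ C, α (scale γ x) = γ * α x)
    (hβc : ContinuousOn β C) (hβnn : ∀ x ∈ C, 0 ≤ β x)
    (hβhom : ∀ γ > (0 : ℝ), ∀ x ∈ C, β (scale γ x) = γ * β x)
    (K r η : ℝ) (hK : 0 < K) (hr : 0 ≤ r) (hη : η = -1)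
    (φ : ℕ → StateSpace d₁ d₂ d₃ → ℝ)
    (hφdef : ∀ k ≤ n, ∀ x ∈ C,
      φ k x = Real.exp (-(r * t k)) * max (η * (α x - β x - K)) 0)
    (hφLa : ∀ k ≤ n, φ k ∈ La)
    (κ : ℕ → Kernel (StateSpace d₁ d₂ d₃) (StateSpace d₁ d₂ d₃))
    (hκ : ∀ k, IsMarkovKernel (κ k))
    (hκC : ∀ k < n, ∀ x ∈ C, (κ k) x Cᶜ = 0)
    (hgc : ∀ k < n, ∀ ψ ∈ La,
      (∀ x ∈ C, Integrable ψ ((κ k) x)) ∧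
      (fun x => ∫ y, ψ y ∂((κ k) x)) ∈ La)
    (hκscale : ∀ k < n, ∀ γ > (0 : ℝ), ∀ x ∈ C,
      Measure.map (scale γ) ((κ k) x) = (κ k) (scale γ x))
    (v : ℕ → StateSpace d₁ d₂ d₃ → ℝ)
    (hvn : ∀ x ∈ C, v n x = φ n x)
    (hv : ∀ k < n, ∀ x ∈ C, v k x = max (φ k x) (∫ y, v (k + 1) y ∂((κ k) x)))
    (e : ℕ → StateSpace d₁ d₂ d₃ → ℝ)
    (hen : ∀ x ∈ C, e n x = φ n x)
    (he : ∀ k < n, ∀ x ∈ C, e k x = ∫ y, e (k + 1) y ∂((κ k) x))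
    (hepos : ∀ k < n, ∀ x ∈ C, 0 < e k x)
    (S : ℕ → Set (StateSpace d₁ d₂ d₃))
    (hS : ∀ k, S k = {x | x ∈ C ∧ v k x = φ k x})
    (Ξ : StateSpace d₁ d₂ d₃ → StateSpace d₁ d₂ d₃)
    (hΞ : ∀ x ∈ C, Ξ x = scale (α x)⁻¹ x)
    (fstar : ℕ → StateSpace d₁ d₂ d₃ → ℝ≥0∞)
    (hfstar : ∀ k < n, ∀ ξ, fstar k ξ =
      sSup ((fun x => ENNReal.ofReal (α x)) '' {x | x ∈ S k ∧ Ξ x = ξ})) :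
    (∃ H : ↥C ≃ₜ ↥(Set.Ioi (0 : ℝ) ×ˢ (Ξ '' C)),
      ∀ x : ↥C, (H x : ℝ × StateSpace d₁ d₂ d₃) = (α ↑x, Ξ ↑x)) ∧
    (∀ k < n, S k = {x | x ∈ C ∧ ENNReal.ofReal (α x) ≤ fstar k (Ξ x)}) :=
  stmt_4_general C scale hscale hC n t ht a La hLa α β hαc hαpos hαhom hβhom K r η hK hr hη φ hφdef
    hφLa κ hκ hκC hgc hκscale v hvn hv e hen he hepos S hS Ξ hΞ fstar hfstar
end

section
/- Suppose η = −1 (put case). Then the value functions satisfy the scaling inequality v_k(γ∘x) ≤ γ v_k(x) + e^{−r t_k}(1−γ)K for every k ∈ {0,…,n}, every x ∈ C and every γ ∈ (0,1]. -/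
/-!
Backward induction on `k`. For the put payoff, `K - γ u = γ (K - u) + (1 - γ) K` with `γ ∈ (0, 1]`,
so the positive part of the scaled payoff is at most `γ` times the positive part plus `(1 - γ) K`.
Since the kernels commute with scaling, `∫ v_{k+1} dκ_k(γ∘x) = ∫ v_{k+1}(γ∘y) dκ_k(x)`, and the
inequality for `v_{k+1}` integrates to the one for the continuation value, with the smaller
discount `e^{-r t_{k+1}} ≤ e^{-r t_k}`. Membership in the growth class `𝓛_a` is carried along the
induction to keep `v_{k+1}` integrable against the kernels.
-/

open MeasureTheory ProbabilityTheory

def polyGrowth {E : Type*} [TopologicalSpace E] [Norm E] (C : Set E) (a : ℝ) : Set (E → ℝ) :=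
  {ψ | ContinuousOn ψ C ∧ ∃ c > 0, ∀ x ∈ C, |ψ x| ≤ c * (1 + ‖x‖ ^ a)}

section polyGrowth

variable {E : Type*} [TopologicalSpace E] [Norm E] {C : Set E} {a : ℝ} {f g ψ : E → ℝ}

theorem mem_polyGrowth_of_eqOn (hf : f ∈ polyGrowth C a) (h : Set.EqOn ψ f C) :
    ψ ∈ polyGrowth C a := by
  obtain ⟨hfc, c, hc, hfb⟩ := hf
  exact ⟨hfc.congr h, c, hc, fun x hx => h hx ▸ hfb x hx⟩

theorem max_mem_polyGrowth (hf : f ∈ polyGrowth C a) (hg : g ∈ polyGrowth C a) :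
    (fun x => max (f x) (g x)) ∈ polyGrowth C a := by
  obtain ⟨hfc, cf, hcf, hfb⟩ := hf
  obtain ⟨hgc, cg, hcg, hgb⟩ := hg
  refine ⟨hfc.sup hgc, cf + cg, add_pos hcf hcg, fun x hx => ?_⟩
  calc |max (f x) (g x)| ≤ max |f x| |g x| := abs_max_le_max_abs_abs
    _ ≤ |f x| + |g x| := max_le_add_of_nonneg (abs_nonneg _) (abs_nonneg _)
    _ ≤ cf * (1 + ‖x‖ ^ a) + cg * (1 + ‖x‖ ^ a) := add_le_add (hfb x hx) (hgb x hx)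
    _ = (cf + cg) * (1 + ‖x‖ ^ a) := by ring

end polyGrowth

theorem max_sub_mul_zero_le {K u γ : ℝ} (hK : 0 ≤ K) (hγ0 : 0 ≤ γ) (hγ1 : γ ≤ 1) :
    max (K - γ * u) 0 ≤ γ * max (K - u) 0 + (1 - γ) * K := by
  have hγK : 0 ≤ (1 - γ) * K := mul_nonneg (by linarith) hK
  apply max_le
  · nlinarith [le_max_left (K - u) 0]
  · nlinarith [le_max_right (K - u) 0]

theorem max_le_mul_max_add {a a' b b' c c' γ : ℝ} (hγ : 0 ≤ γ) (h : a ≤ γ * b + c)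
    (h' : a' ≤ γ * b' + c') (hc : c' ≤ c) : max a a' ≤ γ * max b b' + c :=
  max_le (h.trans (by gcongr; exact le_max_left _ _))
    (h'.trans (by gcongr; exact le_max_right _ _))

theorem put_payoff_scale_le {X : Type*} {C : Set X} {s : X → X} {φ α β : X → ℝ} {D K γ : ℝ}
    (hD : 0 ≤ D) (hK : 0 ≤ K) (hγ0 : 0 ≤ γ) (hγ1 : γ ≤ 1)
    (hφ : ∀ x ∈ C, φ x = D * max (-1 * (α x - β x - K)) 0)
    (hα : ∀ x ∈ C, α (s x) = γ * α x) (hβ : ∀ x ∈ C, β (s x) = γ * β x)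
    (hsC : ∀ x ∈ C, s x ∈ C) {x : X} (hx : x ∈ C) :
    φ (s x) ≤ γ * φ x + D * (1 - γ) * K := by
  rw [hφ _ (hsC x hx), hφ x hx, hα x hx, hβ x hx]
  calc D * max (-1 * (γ * α x - γ * β x - K)) 0
      = D * max (K - γ * (α x - β x)) 0 := by ring_nf
    _ ≤ D * (γ * max (K - (α x - β x)) 0 + (1 - γ) * K) :=
      mul_le_mul_of_nonneg_left (max_sub_mul_zero_le hK hγ0 hγ1) hD
    _ = γ * (D * max (-1 * (α x - β x - K)) 0) + D * (1 - γ) * K := by ring_nf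

theorem integral_map_le_of_ae_comp_le {X : Type*} [MeasurableSpace X] {μ : Measure X}
    [IsProbabilityMeasure μ] {s : X → X} (hs : Measurable s) {f : X → ℝ}
    (hf : Integrable f μ) (hfs : Integrable f (μ.map s)) {γ c : ℝ}
    (h : ∀ᵐ y ∂μ, f (s y) ≤ γ * f y + c) :
    ∫ y, f y ∂(μ.map s) ≤ γ * ∫ y, f y ∂μ + c :=
  calc ∫ y, f y ∂(μ.map s) = ∫ y, f (s y) ∂μ :=
        integral_map hs.aemeasurable hfs.aestronglyMeasurable
    _ ≤ ∫ y, (γ * f y + c) ∂μ :=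
        integral_mono_ae (hfs.comp_measurable hs) ((hf.const_mul γ).add (integrable_const c)) h
    _ = γ * ∫ y, f y ∂μ + c := by
        rw [integral_add (hf.const_mul γ) (integrable_const c), integral_const_mul,
          integral_const, probReal_univ, one_smul]

theorem ProbabilityTheory.Kernel.integral_apply_le_of_comp_le {X : Type*} [MeasurableSpace X]
    {C : Set X} {κ : Kernel X X} [IsMarkovKernel κ] {s : X → X} (hs : Measurable s)
    (hsC : ∀ x ∈ C, s x ∈ C) (hκC : ∀ x ∈ C, κ x Cᶜ = 0)
    (hκs : ∀ x ∈ C, (κ x).map s = κ (s x)) {f : X → ℝ} (hf : ∀ x ∈ C, Integrable f (κ x))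
    {γ c : ℝ} (hfs : ∀ x ∈ C, f (s x) ≤ γ * f x + c) {x : X} (hx : x ∈ C) :
    ∫ y, f y ∂κ (s x) ≤ γ * ∫ y, f y ∂κ x + c := by
  rw [← hκs x hx]
  refine integral_map_le_of_ae_comp_le hs (hf x hx) (hκs x hx ▸ hf _ (hsC x hx)) ?_
  exact (ae_iff.mpr (hκC x hx)).mono fun y hy => hfs y hy

theorem stmt_8_general
    {d₁ d₂ d₃ : ℕ}
    (C : Set (StateSpace d₁ d₂ d₃))
    (scale : ℝ → StateSpace d₁ d₂ d₃ → StateSpace d₁ d₂ d₃)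
    (hscale : ∀ γ x, scale γ x = (γ • x.1, x.2.1, γ • x.2.2))
    (hC : ∀ γ > (0 : ℝ), ∀ x ∈ C, scale γ x ∈ C)
    (n : ℕ) (t : ℕ → ℝ) (ht : ∀ i < n, t i < t (i + 1))
    (a : ℝ)
    (La : Set (StateSpace d₁ d₂ d₃ → ℝ))
    (hLa : La = {ψ | ContinuousOn ψ C ∧
      ∃ c > 0, ∀ x ∈ C, |ψ x| ≤ c * (1 + ‖x‖ ^ a)})
    (α β : StateSpace d₁ d₂ d₃ → ℝ)
    (hαhom : ∀ γ > (0 : ℝ), ∀ x ∈ C, α (scale γ x) = γ * α x)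
    (hβhom : ∀ γ > (0 : ℝ), ∀ x ∈ C, β (scale γ x) = γ * β x)
    (K r η : ℝ) (hK : 0 < K) (hr : 0 ≤ r) (hη : η = -1)
    (φ : ℕ → StateSpace d₁ d₂ d₃ → ℝ)
    (hφdef : ∀ k ≤ n, ∀ x ∈ C,
      φ k x = Real.exp (-(r * t k)) * max (η * (α x - β x - K)) 0)
    (hφLa : ∀ k ≤ n, φ k ∈ La)
    (κ : ℕ → Kernel (StateSpace d₁ d₂ d₃) (StateSpace d₁ d₂ d₃))
    (hκ : ∀ k, IsMarkovKernel (κ k))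
    (hκC : ∀ k < n, ∀ x ∈ C, (κ k) x Cᶜ = 0)
    (hgc : ∀ k < n, ∀ ψ ∈ La,
      (∀ x ∈ C, Integrable ψ ((κ k) x)) ∧
      (fun x => ∫ y, ψ y ∂((κ k) x)) ∈ La)
    (hκscale : ∀ k < n, ∀ γ > (0 : ℝ), ∀ x ∈ C,
      Measure.map (scale γ) ((κ k) x) = (κ k) (scale γ x))
    (v : ℕ → StateSpace d₁ d₂ d₃ → ℝ)
    (hvn : ∀ x ∈ C, v n x = φ n x)
    (hv : ∀ k < n, ∀ x ∈ C, v k x = max (φ k x) (∫ y, v (k + 1) y ∂((κ k) x))) :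
    ∀ k ≤ n, ∀ x ∈ C, ∀ γ : ℝ, 0 < γ → γ ≤ 1 →
      v k (scale γ x) ≤ γ * v k x + Real.exp (-(r * t k)) * (1 - γ) * K := by
  subst hη
  change La = polyGrowth C a at hLa
  subst hLa
  set disc : ℕ → ℝ := fun k => Real.exp (-(r * t k))
  have hφscale : ∀ k ≤ n, ∀ x ∈ C, ∀ γ : ℝ, 0 < γ → γ ≤ 1 →
      φ k (scale γ x) ≤ γ * φ k x + disc k * (1 - γ) * K := fun k hk x hx γ hγ hγ1 =>
    put_payoff_scale_le (Real.exp_pos _).le hK.le hγ.le hγ1 (hφdef k hk) (hαhom γ hγ)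
      (hβhom γ hγ) (hC γ hγ) hx
  have hscale_meas : ∀ γ, Measurable (scale γ) := fun γ => by
    rw [funext (hscale γ)]; fun_prop
  suffices key : ∀ k ≤ n, v k ∈ polyGrowth C a ∧ ∀ x ∈ C, ∀ γ : ℝ, 0 < γ → γ ≤ 1 →
      v k (scale γ x) ≤ γ * v k x + disc k * (1 - γ) * K from fun k hk => (key k hk).2
  intro k hk
  induction hk using Nat.decreasingInduction with
  | self =>
    refine ⟨mem_polyGrowth_of_eqOn (hφLa n le_rfl) hvn, fun x hx γ hγ hγ1 => ?_⟩
    rw [hvn _ (hC γ hγ x hx), hvn x hx]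
    exact hφscale n le_rfl x hx γ hγ hγ1
  | of_succ k hk ih =>
    obtain ⟨hv_mem, hv_scale⟩ := ih
    obtain ⟨hint, hcont_mem⟩ := hgc k hk _ hv_mem
    refine ⟨mem_polyGrowth_of_eqOn (max_mem_polyGrowth (hφLa k hk.le) hcont_mem) (hv k hk),
      fun x hx γ hγ hγ1 => ?_⟩
    have := hκ k
    have hcont := Kernel.integral_apply_le_of_comp_le (hscale_meas γ) (hC γ hγ) (hκC k hk)
      (hκscale k hk γ hγ) hint (fun y hy => hv_scale y hy γ hγ hγ1) hx
    have hdisc : disc (k + 1) ≤ disc k :=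
      Real.exp_le_exp.mpr (neg_le_neg (mul_le_mul_of_nonneg_left (ht k hk).le hr))
    rw [hv k hk _ (hC γ hγ x hx), hv k hk x hx]
    exact max_le_mul_max_add hγ.le (hφscale k hk.le x hx γ hγ hγ1) hcont (by gcongr)

/-- Put case (`η = −1`): the value functions of the dynamic programming
recursion `v_n = φ(n,·)`, `v_k(x) = max(φ(k,x), ∫ v_{k+1} dκ_k(x))`, with payoff
`φ(k,x) = e^{−r t_k}(η(α(x) − β(x) − K))⁺` (with `α, β` positively homogeneous of degree
one in `(s,z)` and the kernels scaling linearly), satisfy the scaling inequality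
`v_k(γ∘x) ≤ γ v_k(x) + e^{−r t_k}(1−γ)K` for every `k ∈ {0,…,n}`, every `x ∈ C` and every
`γ ∈ (0,1]`, where `γ∘(s,y,z) = (γs, y, γz)`. -/
theorem stmt_8
    {d₁ d₂ d₃ : ℕ}
    (C : Set (StateSpace d₁ d₂ d₃)) (hCmeas : MeasurableSet C)
    (scale : ℝ → StateSpace d₁ d₂ d₃ → StateSpace d₁ d₂ d₃)
    (hscale : ∀ γ x, scale γ x = (γ • x.1, x.2.1, γ • x.2.2))
    (hC : ∀ γ > (0 : ℝ), ∀ x ∈ C, scale γ x ∈ C)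
    (n : ℕ) (hn : 1 ≤ n) (t : ℕ → ℝ) (ht : ∀ i < n, t i < t (i + 1))
    (a : ℝ) (ha : 0 < a)
    (La : Set (StateSpace d₁ d₂ d₃ → ℝ))
    (hLa : La = {ψ | ContinuousOn ψ C ∧
      ∃ c > 0, ∀ x ∈ C, |ψ x| ≤ c * (1 + ‖x‖ ^ a)})
    (α β : StateSpace d₁ d₂ d₃ → ℝ)
    (hαc : ContinuousOn α C) (hαpos : ∀ x ∈ C, 0 < α x)
    (hαhom : ∀ γ > (0 : ℝ), ∀ x ∈ C, α (scale γ x) = γ * α x)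
    (hβc : ContinuousOn β C) (hβnn : ∀ x ∈ C, 0 ≤ β x)
    (hβhom : ∀ γ > (0 : ℝ), ∀ x ∈ C, β (scale γ x) = γ * β x)
    (K r η : ℝ) (hK : 0 < K) (hr : 0 ≤ r) (hη : η = -1)
    (φ : ℕ → StateSpace d₁ d₂ d₃ → ℝ)
    (hφdef : ∀ k ≤ n, ∀ x ∈ C,
      φ k x = Real.exp (-(r * t k)) * max (η * (α x - β x - K)) 0)
    (hφLa : ∀ k ≤ n, φ k ∈ La)
    (κ : ℕ → Kernel (StateSpace d₁ d₂ d₃) (StateSpace d₁ d₂ d₃))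
    (hκ : ∀ k, IsMarkovKernel (κ k))
    (hκC : ∀ k < n, ∀ x ∈ C, (κ k) x Cᶜ = 0)
    (hgc : ∀ k < n, ∀ ψ ∈ La,
      (∀ x ∈ C, Integrable ψ ((κ k) x)) ∧
      (fun x => ∫ y, ψ y ∂((κ k) x)) ∈ La)
    (hκscale : ∀ k < n, ∀ γ > (0 : ℝ), ∀ x ∈ C,
      Measure.map (scale γ) ((κ k) x) = (κ k) (scale γ x))
    (v : ℕ → StateSpace d₁ d₂ d₃ → ℝ)
    (hvn : ∀ x ∈ C, v n x = φ n x)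
    (hv : ∀ k < n, ∀ x ∈ C, v k x = max (φ k x) (∫ y, v (k + 1) y ∂((κ k) x))) :
    ∀ k ≤ n, ∀ x ∈ C, ∀ γ : ℝ, 0 < γ → γ ≤ 1 →
      v k (scale γ x) ≤ γ * v k x + Real.exp (-(r * t k)) * (1 - γ) * K :=
  stmt_8_general C scale hscale hC n t ht a La hLa α β hαhom hβhom K r η hK hr hη φ hφdef hφLa κ hκ
    hκC hgc hκscale v hvn hv
end

section
/- Let S ⊆ X be a closed set that is downward closed along the fibers of Ξ: whenever x ∈ S and 0 < a ≤ α(x), the point h⁻¹(a, Ξ(x)) belongs to S. Define f* : Y → [0,∞] by f*(ξ) := sup{ α(x) : x ∈ S, Ξ(x) = ξ }, with the convention sup ∅ := 0. Then S = { x ∈ X : α(x) ≤ f*(Ξ(x)) }, i.e. S is exactly the hypograph of the boundary function f* in the coordinates (α, Ξ). -/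
open scoped ENNReal NNReal
open Topology Filter

/-- Let `X`, `Y` be topological spaces and `h : X → (0,∞) × Y` a
homeomorphism; write `α(x)` and `Ξ(x)` for the two components of `h x`.
Let `S ⊆ X` be a closed set that is downward closed along the fibers of `Ξ`:
whenever `x ∈ S` and `0 < a ≤ α(x)`, the point `h⁻¹(a, Ξ(x))` belongs to `S`.
Define `f* : Y → [0,∞]` by `f*(ξ) := sup{ α(x) : x ∈ S, Ξ(x) = ξ }` (with `sup ∅ := 0`).
Then `S = { x ∈ X : α(x) ≤ f*(Ξ(x)) }`, i.e. `S` is exactly the hypograph of the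
boundary function `f*` in the coordinates `(α, Ξ)`. -/
theorem stmt_10 {X Y : Type*} [TopologicalSpace X] [TopologicalSpace Y]
    (h : X ≃ₜ ↥(Set.Ioi (0 : ℝ)) × Y)
    (α : X → ℝ) (hα : ∀ x, α x = ((h x).1 : ℝ))
    (Ξ : X → Y) (hΞ : ∀ x, Ξ x = (h x).2)
    (S : Set X) (hS : IsClosed S)
    (hdown : ∀ x ∈ S, ∀ a : ℝ, ∀ ha : 0 < a, a ≤ α x →
      h.symm (⟨a, ha⟩, Ξ x) ∈ S)
    (fstar : Y → ℝ≥0∞)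
    (hf : ∀ ξ, fstar ξ = sSup ((fun x => ENNReal.ofReal (α x)) '' {x | x ∈ S ∧ Ξ x = ξ})) :
    S = {x | ENNReal.ofReal (α x) ≤ fstar (Ξ x)} := by
  have hpos : ∀ x : X, 0 < α x := fun x => (hα x) ▸ (h x).1.2
  have hxeq : ∀ x : X, h.symm (⟨α x, hpos x⟩, Ξ x) = x := by
    intro x
    have hpt : ((⟨α x, hpos x⟩ : Set.Ioi (0:ℝ)), Ξ x) = h x :=
      Prod.ext (Subtype.ext (hα x)) (hΞ x)
    rw [hpt, Homeomorph.symm_apply_apply]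
  ext x
  simp only [Set.mem_setOf_eq]
  constructor
  · intro hx
    rw [hf]
    exact le_sSup ⟨x, ⟨hx, rfl⟩, rfl⟩
  · intro hx
    by_cases hw : ∃ x' ∈ S, Ξ x' = Ξ x ∧ α x ≤ α x'
    · obtain ⟨x', hx'S, hΞ', hle⟩ := hw
      have := hdown x' hx'S (α x) (hpos x) hle
      rwa [hΞ', hxeq x] at this
    · set a : ℕ → ℝ := fun n => α x - min (α x / 2) (1 / (n + 1)) with ha
      have hapos : ∀ n, 0 < a n := by
        intro n
        have h1 : min (α x / 2) (1 / (n + 1 : ℝ)) ≤ α x / 2 := min_le_left _ _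
        have h2 := hpos x
        simp only [ha]
        linarith
      have halt : ∀ n, a n < α x := by
        intro n
        have h1 : (0:ℝ) < min (α x / 2) (1 / (n + 1 : ℝ)) :=
          lt_min (by linarith [hpos x]) (by positivity)
        simp only [ha]
        linarith
      have hmem : ∀ n, h.symm (⟨a n, hapos n⟩, Ξ x) ∈ S := by
        intro n
        have hlt : ENNReal.ofReal (a n) <
            sSup ((fun x => ENNReal.ofReal (α x)) '' {x' | x' ∈ S ∧ Ξ x' = Ξ x}) := by
          rw [← hf]
          exact lt_of_lt_of_le ((ENNReal.ofReal_lt_ofReal_iff (hpos x)).mpr (halt n)) hx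
        obtain ⟨b, ⟨x', ⟨hx'S, hΞ'⟩, rfl⟩, hblt⟩ := lt_sSup_iff.mp hlt
        have han : a n ≤ α x' :=
          le_of_lt ((ENNReal.ofReal_lt_ofReal_iff_of_nonneg (hapos n).le).mp hblt)
        have := hdown x' hx'S (a n) (hapos n) han
        rwa [hΞ'] at this
      have hta : Filter.Tendsto a Filter.atTop (𝓝 (α x)) := by
        have h0 : Filter.Tendsto (fun n : ℕ => min (α x / 2) (1 / (n + 1 : ℝ)))
            Filter.atTop (𝓝 0) := by
          have := tendsto_const_nhds.min
            (f := fun _ : ℕ => α x / 2) tendsto_one_div_add_atTop_nhds_zero_nat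
          rwa [min_eq_right (by linarith [hpos x] : (0:ℝ) ≤ α x / 2)] at this
        have := tendsto_const_nhds.sub (f := fun _ : ℕ => α x) h0
        rwa [sub_zero] at this
      have hconv : Filter.Tendsto (fun n => h.symm (⟨a n, hapos n⟩, Ξ x))
          Filter.atTop (𝓝 x) := by
        have hts : Filter.Tendsto (fun n => (⟨a n, hapos n⟩ : Set.Ioi (0:ℝ)))
            Filter.atTop (𝓝 ⟨α x, hpos x⟩) := by
          rw [tendsto_subtype_rng]
          exact hta
        have := (h.symm.continuous.tendsto (⟨α x, hpos x⟩, Ξ x)).comp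
          (hts.prodMk_nhds tendsto_const_nhds)
        rwa [hxeq x] at this
      exact hS.mem_of_tendsto hconv (Filter.Eventually.of_forall hmem)
end

section
/- Let S ⊆ X be a closed set that is upward closed along the fibers of Ξ: whenever x ∈ S and a ≥ α(x), the point h⁻¹(a, Ξ(x)) belongs to S. Define f* : Y → [0,∞] by f*(ξ) := inf{ α(x) : x ∈ S, Ξ(x) = ξ }, with the convention inf ∅ := ∞. Then S = { x ∈ X : f*(Ξ(x)) ≤ α(x) }, i.e. S is exactly the epigraph of the boundary function f* in the coordinates (α, Ξ). -/
open scoped ENNReal NNReal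

/-! If `f*(Ξ x) ≤ α x`, then for every `a > α x` some point of `S` over `Ξ x` lies below
height `a`, so upward closure puts `h⁻¹(a, Ξ x)` in `S`. These points converge to
`x = h⁻¹(α x, Ξ x)` as `a ↓ α x`, and `S` is closed. -/

theorem IsClosed.mem_of_forall_gt_mem {T : Type*} [TopologicalSpace T] [LinearOrder T]
    [OrderTopology T] [DenselyOrdered T] [NoMaxOrder T] {C : Set T} (hC : IsClosed C) {t : T}
    (h : ∀ s, t < s → s ∈ C) : t ∈ C := by
  have ht : t ∈ closure (Set.Ioi t) := by simp only [closure_Ioi, Set.mem_Ici, le_refl]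
  exact hC.closure_subset_iff.2 h ht

theorem Homeomorph.mem_of_forall_gt_exists_mem_fiber {X T Y : Type*} [TopologicalSpace X]
    [TopologicalSpace T] [TopologicalSpace Y] [LinearOrder T] [OrderTopology T]
    [DenselyOrdered T] [NoMaxOrder T] (h : X ≃ₜ T × Y) {S : Set X} (hS : IsClosed S)
    (hup : ∀ x ∈ S, ∀ t, (h x).1 ≤ t → h.symm (t, (h x).2) ∈ S) {x : X}
    (hx : ∀ t, (h x).1 < t → ∃ x' ∈ S, (h x').2 = (h x).2 ∧ (h x').1 < t) : x ∈ S := by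
  have hfiber : IsClosed {t | h.symm (t, (h x).2) ∈ S} := hS.preimage (by fun_prop)
  have hxfiber : (h x).1 ∈ {t | h.symm (t, (h x).2) ∈ S} := by
    refine hfiber.mem_of_forall_gt_mem fun t ht => ?_
    obtain ⟨x', hx'S, hx'fiber, hx't⟩ := hx t ht
    simpa only [Set.mem_ofPred_eq, hx'fiber] using hup x' hx'S t hx't.le
  simpa only [Set.mem_ofPred_eq, Prod.mk.eta, h.symm_apply_apply] using hxfiber

/-- Let `X`, `Y` be topological spaces and `h : X → (0,∞) × Y` a
homeomorphism; write `α(x)` and `Ξ(x)` for the two components of `h x`.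
Let `S ⊆ X` be a closed set that is upward closed along the fibers of `Ξ`:
whenever `x ∈ S` and `a ≥ α(x)`, the point `h⁻¹(a, Ξ(x))` belongs to `S`.
Define `f* : Y → [0,∞]` by `f*(ξ) := inf{ α(x) : x ∈ S, Ξ(x) = ξ }` (with `inf ∅ := ∞`).
Then `S = { x ∈ X : f*(Ξ(x)) ≤ α(x) }`, i.e. `S` is exactly the epigraph of the
boundary function `f*` in the coordinates `(α, Ξ)`. -/
theorem stmt_11 {X Y : Type*} [TopologicalSpace X] [TopologicalSpace Y]
    (h : X ≃ₜ ↥(Set.Ioi (0 : ℝ)) × Y)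
    (α : X → ℝ) (hα : ∀ x, α x = ((h x).1 : ℝ))
    (Ξ : X → Y) (hΞ : ∀ x, Ξ x = (h x).2)
    (S : Set X) (hS : IsClosed S)
    (hup : ∀ x ∈ S, ∀ a : ℝ, ∀ ha : 0 < a, α x ≤ a →
      h.symm (⟨a, ha⟩, Ξ x) ∈ S)
    (fstar : Y → ℝ≥0∞)
    (hf : ∀ ξ, fstar ξ = sInf ((fun x => ENNReal.ofReal (α x)) '' {x | x ∈ S ∧ Ξ x = ξ})) :
    S = {x | fstar (Ξ x) ≤ ENNReal.ofReal (α x)} := by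
  obtain rfl : α = fun x => ((h x).1 : ℝ) := funext hα
  obtain rfl : Ξ = fun x => (h x).2 := funext hΞ
  ext x
  refine ⟨fun hx => (hf _).trans_le (sInf_le ⟨x, ⟨hx, rfl⟩, rfl⟩), fun hx => ?_⟩
  refine h.mem_of_forall_gt_exists_mem_fiber hS (fun x' hx' t => hup x' hx' t t.2) fun t ht => ?_
  have hlt : fstar (h x).2 < ENNReal.ofReal t :=
    hx.trans_lt ((ENNReal.ofReal_lt_ofReal_iff t.2).2 ht)
  rw [hf, sInf_lt_iff] at hlt
  obtain ⟨-, ⟨x', ⟨hx'S, hx'fiber⟩, rfl⟩, hx't⟩ := hlt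
  exact ⟨x', hx'S, hx'fiber, (ENNReal.ofReal_lt_ofReal_iff' .. |>.1 hx't).1⟩
end

section
/- Assume that for every k < n the event { d(k, X_k) = 0 } has probability zero. Then the expected relaxed reward converges to the value of the boundary stopping rule as the fuzzy width tends to zero: lim_{ε → 0⁺} E[ R_ε ] = E[ φ(τ_f, X_{τ_f}) ]. -/
open MeasureTheory Filter

/-- Setting: `X_k : Ω → 𝒳` measurable, `d(k,x) = η(f(k,Ξ(x)) − α(x))`
for `k < n`, stopping probabilities `p_ε(k,x) = min(max((ε − d(k,x))/(2ε), 0), 1)` for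
`k < n` and `p_ε(n,·) = 1`, stopping budgets `b_{ε,0} = 1`,
`b_{ε,k+1}(ω) = b_{ε,k}(ω)(1 − p_ε(k, X_k(ω)))`, `φ(k, X_k)` integrable, relaxed reward
`R_ε(ω) = Σ_{k=0}^n p_ε(k, X_k(ω)) b_{ε,k}(ω) φ(k, X_k(ω))`, and boundary stopping time
`τ_f(ω) = min({k < n : d(k, X_k(ω)) ≤ 0} ∪ {n})`.
Assume that for every `k < n` the event `{d(k, X_k) = 0}` has probability zero.  Then the
expected relaxed reward converges to the value of the boundary stopping rule as the fuzzy
width tends to zero: `lim_{ε → 0⁺} E[R_ε] = E[φ(τ_f, X_{τ_f})]`. -/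
theorem stmt_13
    {Ω 𝒳 Y : Type*} {mΩ : MeasurableSpace Ω} [MeasurableSpace 𝒳] [MeasurableSpace Y]
    (ℙ : Measure Ω) [IsProbabilityMeasure ℙ]
    (n : ℕ) (hn : 1 ≤ n)
    (X : ℕ → Ω → 𝒳) (hX : ∀ k, Measurable (X k))
    (α : 𝒳 → ℝ) (hαm : Measurable α)
    (Ξ : 𝒳 → Y) (hΞm : Measurable Ξ)
    (f : ℕ → Y → ℝ) (hfm : ∀ k < n, Measurable (f k))
    (η : ℝ) (hη : η = 1 ∨ η = -1)
    (dd : ℕ → 𝒳 → ℝ) (hd : ∀ k < n, ∀ x, dd k x = η * (f k (Ξ x) - α x))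
    (p : ℝ → ℕ → 𝒳 → ℝ)
    (hp : ∀ ε > (0 : ℝ), ∀ k < n, ∀ x, p ε k x = min (max ((ε - dd k x) / (2 * ε)) 0) 1)
    (hpn : ∀ ε > (0 : ℝ), ∀ x, p ε n x = 1)
    (b : ℝ → ℕ → Ω → ℝ)
    (hb0 : ∀ ε > (0 : ℝ), ∀ ω, b ε 0 ω = 1)
    (hb : ∀ ε > (0 : ℝ), ∀ k ≤ n, ∀ ω, b ε (k + 1) ω = b ε k ω * (1 - p ε k (X k ω)))
    (φ : ℕ → 𝒳 → ℝ) (hφm : ∀ k ≤ n, Measurable (φ k))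
    (hφi : ∀ k ≤ n, Integrable (fun ω => φ k (X k ω)) ℙ)
    (R : ℝ → Ω → ℝ)
    (hR : ∀ ε > (0 : ℝ), ∀ ω,
      R ε ω = ∑ k ∈ Finset.range (n + 1), p ε k (X k ω) * b ε k ω * φ k (X k ω))
    (τ : Ω → ℕ)
    (hτ : ∀ ω, τ ω = sInf ({k | k < n ∧ dd k (X k ω) ≤ 0} ∪ {n}))
    (hzero : ∀ k < n, ℙ {ω | dd k (X k ω) = 0} = 0) :
    Tendsto (fun ε => ∫ ω, R ε ω ∂ℙ) (nhdsWithin 0 (Set.Ioi 0))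
      (nhds (∫ ω, φ (τ ω) (X (τ ω) ω) ∂ℙ)) := by
  classical
  have hdm : ∀ k, k < n → Measurable (dd k) := by
    intro k hk
    have hfun : dd k = fun x => η * (f k (Ξ x) - α x) := funext (hd k hk)
    rw [hfun]
    exact measurable_const.mul (((hfm k hk).comp hΞm).sub hαm)
  have hp01 : ∀ ε > (0:ℝ), ∀ k ≤ n, ∀ x, 0 ≤ p ε k x ∧ p ε k x ≤ 1 := by
    intro ε hε k hk x
    rcases lt_or_eq_of_le hk with h | h
    · rw [hp ε hε k h x]
      exact ⟨le_min (le_max_right _ _) zero_le_one, min_le_right _ _⟩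
    · subst h; rw [hpn ε hε x]; exact ⟨zero_le_one, le_refl 1⟩
  have hb01 : ∀ ε > (0:ℝ), ∀ k, k ≤ n → ∀ ω, 0 ≤ b ε k ω ∧ b ε k ω ≤ 1 := by
    intro ε hε k
    induction k with
    | zero => intro _ ω; rw [hb0 ε hε ω]; exact ⟨zero_le_one, le_refl 1⟩
    | succ k ih =>
      intro hk ω
      have hk' : k ≤ n := le_of_lt (Nat.lt_of_succ_le hk)
      rw [hb ε hε k hk' ω]
      obtain ⟨h0, h1⟩ := ih hk' ω
      obtain ⟨q0, q1⟩ := hp01 ε hε k hk' (X k ω)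
      constructor
      · exact mul_nonneg h0 (by linarith)
      · nlinarith
  have hpXmeas : ∀ ε > (0:ℝ), ∀ k, k ≤ n → Measurable (fun ω => p ε k (X k ω)) := by
    intro ε hε k hk
    rcases lt_or_eq_of_le hk with h | h
    · have hfun : (fun ω => p ε k (X k ω))
          = fun ω => min (max ((ε - dd k (X k ω)) / (2 * ε)) 0) 1 :=
        funext fun ω => hp ε hε k h (X k ω)
      rw [hfun]
      exact (((measurable_const.sub ((hdm k h).comp (hX k))).div_const _).max
        measurable_const).min measurable_const
    · have hfun : (fun ω => p ε k (X k ω)) = fun _ => (1:ℝ) := by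
        funext ω; rw [h]; exact hpn ε hε (X n ω)
      rw [hfun]; exact measurable_const
  have hbmeas : ∀ ε > (0:ℝ), ∀ k, k ≤ n → Measurable (b ε k) := by
    intro ε hε k
    induction k with
    | zero =>
      intro _
      have hfun : b ε 0 = fun _ => (1:ℝ) := funext (hb0 ε hε)
      rw [hfun]; exact measurable_const
    | succ k ih =>
      intro hk
      have hk' : k ≤ n := le_of_lt (Nat.lt_of_succ_le hk)
      have hfun : b ε (k+1) = fun ω => b ε k ω * (1 - p ε k (X k ω)) :=
        funext (hb ε hε k hk')
      rw [hfun]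
      exact (ih hk').mul (measurable_const.sub (hpXmeas ε hε k hk'))
  -- a.e. good set
  have hG : ∀ᵐ ω ∂ℙ, ∀ k, k < n → dd k (X k ω) ≠ 0 := by
    rw [ae_all_iff]
    intro k
    by_cases hk : k < n
    · have : ℙ {ω | ¬ (k < n → dd k (X k ω) ≠ 0)} = 0 := by
        refine measure_mono_null ?_ (hzero k hk)
        intro ω hω
        simp only [Set.mem_setOf_eq] at hω ⊢
        by_contra hne
        exact hω (fun _ => hne)
      exact this
    · exact ae_of_all _ (fun ω h => absurd h hk)
  -- pointwise limit
  have hlim : ∀ᵐ ω ∂ℙ, Tendsto (fun ε => R ε ω) (nhdsWithin 0 (Set.Ioi 0))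
      (nhds (φ (τ ω) (X (τ ω) ω))) := by
    filter_upwards [hG] with ω hω
    have hne : (Finset.range n).Nonempty := ⟨0, Finset.mem_range.2 hn⟩
    set δ := (Finset.range n).inf' hne (fun k => |dd k (X k ω)|) with hδ
    have hδpos : 0 < δ := by
      rw [hδ, Finset.lt_inf'_iff]
      intro k hk
      exact abs_pos.2 (hω k (Finset.mem_range.1 hk))
    refine Tendsto.congr' ?_ tendsto_const_nhds
    have hmem : Set.Ioo (0:ℝ) δ ∈ nhdsWithin 0 (Set.Ioi 0) :=
      Ioo_mem_nhdsGT_of_mem ⟨le_refl 0, hδpos⟩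
    filter_upwards [hmem] with ε hε
    have hεpos : (0:ℝ) < ε := hε.1
    have hεsmall : ∀ k, k < n → ε < |dd k (X k ω)| := fun k hk =>
      lt_of_lt_of_le hε.2 (Finset.inf'_le _ (Finset.mem_range.2 hk))
    have hpind : ∀ k, k < n → p ε k (X k ω) = if dd k (X k ω) ≤ 0 then 1 else 0 := by
      intro k hk
      rw [hp ε hεpos k hk]
      by_cases hle : dd k (X k ω) ≤ 0
      · have hdlt : dd k (X k ω) < 0 := lt_of_le_of_ne hle (hω k hk)
        have habs : ε < -(dd k (X k ω)) := by
          have := hεsmall k hk; rwa [abs_of_neg hdlt] at this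
        have h1 : (1:ℝ) ≤ (ε - dd k (X k ω)) / (2 * ε) := by
          rw [le_div_iff₀ (by linarith)]
          linarith
        rw [if_pos hle]
        exact min_eq_right (h1.trans (le_max_left _ _))
      · have hdpos : 0 < dd k (X k ω) := not_le.1 hle
        have habs : ε < dd k (X k ω) := by
          have := hεsmall k hk; rwa [abs_of_pos hdpos] at this
        have h1 : (ε - dd k (X k ω)) / (2 * ε) < 0 :=
          div_neg_of_neg_of_pos (by linarith) (by linarith)
        rw [if_neg hle, max_eq_right h1.le]
        exact min_eq_left zero_le_one
    set t := τ ω with ht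
    have htmem : t ∈ ({k | k < n ∧ dd k (X k ω) ≤ 0} ∪ {n} : Set ℕ) := by
      rw [ht, hτ ω]
      exact Nat.sInf_mem ⟨n, Or.inr rfl⟩
    have htle : t ≤ n := by
      rw [ht, hτ ω]
      exact Nat.sInf_le (Or.inr rfl)
    have hlt_not : ∀ k, k < t → ¬ (k < n ∧ dd k (X k ω) ≤ 0) := by
      intro k hk hc
      have hk' : k < sInf ({k | k < n ∧ dd k (X k ω) ≤ 0} ∪ {n} : Set ℕ) := by
        rw [ht, hτ ω] at hk; exact hk
      exact Nat.notMem_of_lt_sInf hk' (Or.inl hc)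
    have hbval : ∀ k, k ≤ n → b ε k ω = if k ≤ t then 1 else 0 := by
      intro k
      induction k with
      | zero => intro _; rw [hb0 ε hεpos]; simp
      | succ k ih =>
        intro hk
        have hk' : k ≤ n := le_of_lt (Nat.lt_of_succ_le hk)
        have hkn : k < n := Nat.lt_of_succ_le hk
        rw [hb ε hεpos k hk' ω, ih hk']
        rcases lt_trichotomy k t with hkt | hkt | hkt
        · have hdd : ¬ dd k (X k ω) ≤ 0 := fun hc => hlt_not k hkt ⟨hkn, hc⟩
          rw [hpind k hkn, if_neg hdd, if_pos hkt.le, if_pos (Nat.succ_le_of_lt hkt)]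
          ring
        · have hdd : dd k (X k ω) ≤ 0 := by
            rcases htmem with h | h
            · exact hkt ▸ h.2
            · exact absurd (Set.mem_singleton_iff.1 h) (hkt ▸ Nat.ne_of_lt hkn)
          rw [hpind k hkn, if_pos hdd, if_pos hkt.le, if_neg (by omega)]
          ring
        · rw [if_neg (by omega), if_neg (by omega)]
          ring
    show φ t (X t ω) = R ε ω
    rw [hR ε hεpos ω]
    have hp1 : p ε t (X t ω) = 1 := by
      rcases lt_or_eq_of_le htle with h | h
      · have hdd : dd t (X t ω) ≤ 0 := by
          rcases htmem with hm | hm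
          · exact hm.2
          · exact absurd (Set.mem_singleton_iff.1 hm) (Nat.ne_of_lt h)
        rw [hpind t h, if_pos hdd]
      · rw [h]; exact hpn ε hεpos _
    have hb1 : b ε t ω = 1 := by rw [hbval t htle, if_pos (le_refl t)]
    rw [Finset.sum_eq_single t]
    · rw [hp1, hb1]; ring
    · intro k hk hkt
      have hkle : k ≤ n := Nat.lt_succ_iff.1 (Finset.mem_range.1 hk)
      rcases lt_or_gt_of_ne hkt with h | h
      · have hkn : k < n := lt_of_lt_of_le h htle
        have hdd : ¬ dd k (X k ω) ≤ 0 := fun hc => hlt_not k h ⟨hkn, hc⟩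
        rw [hpind k hkn, if_neg hdd]; ring
      · rw [hbval k hkle, if_neg (not_le.2 h)]; ring
    · intro h
      exact absurd (Finset.mem_range.2 (Nat.lt_succ_of_le htle)) h
  -- dominated convergence
  set bound : Ω → ℝ := fun ω => ∑ k ∈ Finset.range (n+1), |φ k (X k ω)| with hbdef
  have hbound_int : Integrable bound ℙ := by
    apply integrable_finset_sum
    intro k hk
    exact (hφi k (Nat.lt_succ_iff.1 (Finset.mem_range.1 hk))).abs
  refine tendsto_integral_filter_of_dominated_convergence bound ?_ ?_ hbound_int hlim
  · filter_upwards [self_mem_nhdsWithin] with ε hε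
    have hε' : (0:ℝ) < ε := hε
    have hfun : R ε = fun ω => ∑ k ∈ Finset.range (n+1),
        p ε k (X k ω) * b ε k ω * φ k (X k ω) := funext (hR ε hε')
    rw [hfun]
    refine (Finset.measurable_sum _ fun k hk => ?_).aestronglyMeasurable
    have hkle : k ≤ n := Nat.lt_succ_iff.1 (Finset.mem_range.1 hk)
    exact ((hpXmeas ε hε' k hkle).mul (hbmeas ε hε' k hkle)).mul
      ((hφm k hkle).comp (hX k))
  · filter_upwards [self_mem_nhdsWithin] with ε hε
    have hε' : (0:ℝ) < ε := hε
    refine ae_of_all _ fun ω => ?_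
    rw [hR ε hε' ω, Real.norm_eq_abs]
    refine (Finset.abs_sum_le_sum_abs _ _).trans (Finset.sum_le_sum fun k hk => ?_)
    have hkle : k ≤ n := Nat.lt_succ_iff.1 (Finset.mem_range.1 hk)
    obtain ⟨q0, q1⟩ := hp01 ε hε' k hkle (X k ω)
    obtain ⟨r0, r1⟩ := hb01 ε hε' k hkle ω
    rw [abs_mul, abs_mul, abs_of_nonneg q0, abs_of_nonneg r0]
    calc p ε k (X k ω) * b ε k ω * |φ k (X k ω)|
        ≤ 1 * |φ k (X k ω)| := by
          have hpb : p ε k (X k ω) * b ε k ω ≤ 1 := by nlinarith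
          exact mul_le_mul_of_nonneg_right hpb (abs_nonneg _)
      _ = |φ k (X k ω)| := one_mul _
end

section
/- Assume that for every k < n the event { d(k, X_k) = 0 } has probability zero. Then for ℙ-almost every ω ∈ Ω, the relaxed reward converges pointwise to the stopped payoff: R_ε(ω) → φ( τ_f(ω), X_{τ_f(ω)}(ω) ) as ε → 0⁺. -/
open MeasureTheory Filter

/-- Setting: `X_k : Ω → 𝒳` measurable, `d(k,x) = η(f(k,Ξ(x)) − α(x))`
for `k < n`, stopping probabilities `p_ε(k,x) = min(max((ε − d(k,x))/(2ε), 0), 1)` for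
`k < n` and `p_ε(n,·) = 1`, stopping budgets `b_{ε,0} = 1`,
`b_{ε,k+1}(ω) = b_{ε,k}(ω)(1 − p_ε(k, X_k(ω)))`, `φ(k, X_k)` integrable, relaxed reward
`R_ε(ω) = Σ_{k=0}^n p_ε(k, X_k(ω)) b_{ε,k}(ω) φ(k, X_k(ω))`, and boundary stopping time
`τ_f(ω) = min({k < n : d(k, X_k(ω)) ≤ 0} ∪ {n})`.
Assume that for every `k < n` the event `{d(k, X_k) = 0}` has probability zero.  Then for
`ℙ`-almost every `ω`, the relaxed reward converges pointwise to the stopped payoff: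
`R_ε(ω) → φ(τ_f(ω), X_{τ_f(ω)}(ω))` as `ε → 0⁺`. -/
theorem stmt_14
    {Ω 𝒳 Y : Type*} {mΩ : MeasurableSpace Ω} [MeasurableSpace 𝒳] [MeasurableSpace Y]
    (ℙ : Measure Ω) [IsProbabilityMeasure ℙ]
    (n : ℕ) (hn : 1 ≤ n)
    (X : ℕ → Ω → 𝒳) (hX : ∀ k, Measurable (X k))
    (α : 𝒳 → ℝ) (hαm : Measurable α)
    (Ξ : 𝒳 → Y) (hΞm : Measurable Ξ)
    (f : ℕ → Y → ℝ) (hfm : ∀ k < n, Measurable (f k))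
    (η : ℝ) (hη : η = 1 ∨ η = -1)
    (dd : ℕ → 𝒳 → ℝ) (hd : ∀ k < n, ∀ x, dd k x = η * (f k (Ξ x) - α x))
    (p : ℝ → ℕ → 𝒳 → ℝ)
    (hp : ∀ ε > (0 : ℝ), ∀ k < n, ∀ x, p ε k x = min (max ((ε - dd k x) / (2 * ε)) 0) 1)
    (hpn : ∀ ε > (0 : ℝ), ∀ x, p ε n x = 1)
    (b : ℝ → ℕ → Ω → ℝ)
    (hb0 : ∀ ε > (0 : ℝ), ∀ ω, b ε 0 ω = 1)
    (hb : ∀ ε > (0 : ℝ), ∀ k ≤ n, ∀ ω, b ε (k + 1) ω = b ε k ω * (1 - p ε k (X k ω)))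
    (φ : ℕ → 𝒳 → ℝ) (hφm : ∀ k ≤ n, Measurable (φ k))
    (hφi : ∀ k ≤ n, Integrable (fun ω => φ k (X k ω)) ℙ)
    (R : ℝ → Ω → ℝ)
    (hR : ∀ ε > (0 : ℝ), ∀ ω,
      R ε ω = ∑ k ∈ Finset.range (n + 1), p ε k (X k ω) * b ε k ω * φ k (X k ω))
    (τ : Ω → ℕ)
    (hτ : ∀ ω, τ ω = sInf ({k | k < n ∧ dd k (X k ω) ≤ 0} ∪ {n}))
    (hzero : ∀ k < n, ℙ {ω | dd k (X k ω) = 0} = 0) :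
    ∀ᵐ ω ∂ℙ, Tendsto (fun ε => R ε ω) (nhdsWithin 0 (Set.Ioi 0))
      (nhds (φ (τ ω) (X (τ ω) ω))) := by
  have hae : ∀ᵐ ω ∂ℙ, ∀ k, ¬ (k < n ∧ dd k (X k ω) = 0) := by
    rw [ae_all_iff]
    intro k
    simp only [ae_iff, not_not]
    by_cases hk : k < n
    · refine measure_mono_null ?_ (hzero k hk)
      intro ω hω
      exact hω.2
    · convert measure_empty (μ := ℙ)
      ext ω
      simp only [Set.mem_setOf_eq, Set.mem_empty_iff_false, iff_false]
      exact fun h => hk h.1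
  filter_upwards [hae] with ω hω
  have hωd : ∀ k < n, dd k (X k ω) ≠ 0 := fun k hk h0 => hω k ⟨hk, h0⟩
  set S : Set ℕ := {k | k < n ∧ dd k (X k ω) ≤ 0} ∪ {n} with hS
  have hnS : n ∈ S := Set.mem_union_right _ rfl
  have hmτ : τ ω = sInf S := hτ ω
  have hmn : τ ω ≤ n := hmτ ▸ Nat.sInf_le hnS
  have hlt : ∀ k < τ ω, 0 < dd k (X k ω) := by
    intro k hk
    have hkS : k ∉ S := by
      rw [hmτ] at hk
      exact Nat.notMem_of_lt_sInf hk
    have hkn : k < n := lt_of_lt_of_le hk hmn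
    by_contra h
    exact hkS (Or.inl ⟨hkn, le_of_not_gt h⟩)
  have hneg : τ ω < n → dd (τ ω) (X (τ ω) ω) < 0 := by
    intro hlt'
    have hmem : τ ω ∈ S := hmτ ▸ Nat.sInf_mem ⟨n, hnS⟩
    rcases hmem with ⟨_, hle⟩ | h
    · exact lt_of_le_of_ne hle (hωd _ hlt')
    · simp only [Set.mem_singleton_iff] at h
      omega
  have hne : (Finset.range n).Nonempty := ⟨0, Finset.mem_range.2 hn⟩
  set δ := (Finset.range n).inf' hne (fun k => |dd k (X k ω)|) with hδ
  have hδpos : 0 < δ := by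
    rw [hδ, Finset.lt_inf'_iff]
    intro k hk
    exact abs_pos.2 (hωd k (Finset.mem_range.1 hk))
  refine Tendsto.congr' ?_ tendsto_const_nhds
  filter_upwards [Ioo_mem_nhdsGT_of_mem (Set.left_mem_Ico.2 hδpos)] with ε hε
  have hε0 : (0:ℝ) < ε := hε.1
  have hεk : ∀ k < n, ε < |dd k (X k ω)| := fun k hk =>
    lt_of_lt_of_le hε.2 (Finset.inf'_le _ (Finset.mem_range.2 hk))
  have hp0 : ∀ k < τ ω, p ε k (X k ω) = 0 := by
    intro k hk
    have hkn : k < n := lt_of_lt_of_le hk hmn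
    rw [hp ε hε0 k hkn]
    have hdpos := hlt k hk
    have habs := hεk k hkn
    rw [abs_of_pos hdpos] at habs
    have hlt0 : (ε - dd k (X k ω)) / (2 * ε) < 0 :=
      div_neg_of_neg_of_pos (by linarith) (by linarith)
    rw [max_eq_right hlt0.le, min_eq_left zero_le_one]
  have hp1 : p ε (τ ω) (X (τ ω) ω) = 1 := by
    rcases eq_or_lt_of_le hmn with heq | hlt'
    · rw [heq]
      exact hpn ε hε0 _
    · rw [hp ε hε0 _ hlt']
      have hdneg := hneg hlt'
      have habs := hεk _ hlt'
      rw [abs_of_neg hdneg] at habs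
      have h1 : (1:ℝ) ≤ (ε - dd (τ ω) (X (τ ω) ω)) / (2 * ε) := by
        rw [le_div_iff₀ (by linarith)]
        linarith
      rw [max_eq_left (le_trans zero_le_one h1), min_eq_right h1]
  have hb1 : ∀ k ≤ τ ω, b ε k ω = 1 := by
    intro k hk
    induction k with
    | zero => exact hb0 ε hε0 ω
    | succ k ih =>
      have hk' : k < τ ω := hk
      rw [hb ε hε0 k (by omega) ω, ih (le_of_lt hk'), hp0 k hk']
      ring
  have hbz : ∀ k, τ ω < k → k ≤ n → b ε k ω = 0 := by
    intro k hk1 hk2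
    induction k with
    | zero => omega
    | succ k ih =>
      rcases Nat.lt_or_ge (τ ω) k with h | h
      · rw [hb ε hε0 k (by omega) ω, ih h (by omega)]
        ring
      · have hkeq : k = τ ω := by omega
        rw [hb ε hε0 k (by omega) ω, hkeq, hb1 _ le_rfl, hp1]
        ring
  have hsum : ∑ k ∈ Finset.range (n + 1), p ε k (X k ω) * b ε k ω * φ k (X k ω)
      = φ (τ ω) (X (τ ω) ω) := by
    rw [Finset.sum_eq_single_of_mem (τ ω) (Finset.mem_range.2 (by omega))]
    · rw [hp1, hb1 _ le_rfl]
      ring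
    · intro k hk hkne
      rcases lt_or_gt_of_ne hkne with h | h
      · rw [hp0 k h]
        ring
      · rw [hbz k h (Nat.lt_succ_iff.1 (Finset.mem_range.1 hk))]
        ring
  rw [hR ε hε0 ω, hsum]
end
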